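/- A nonempty word w is not an inverse Lyndon word if and only if there exist words r, u, t and letters a, b with a < b such that w = r a u r b t. -/

import Mathlib

def LexLt {α : Type*} [LinearOrder α] (x y : List α) : Prop :=
  List.Lex (· < ·) x y

def IsInvLyndonWord {α : Type*} [LinearOrder α] (w : List α) : Prop :=
  w ≠ [] ∧ ∀ s : List α, s <:+ w → s ≠ w → s ≠ [] → LexLt s w

/-!
If `w` is lexicographically smaller than a proper suffix `s`, compare them: `w` cannot be a
prefix of the shorter `s`, so they first differ at letters `a < b` after a common prefix `r`.
If this mismatch occurs before `s` starts inside `w`, then `w = r a u r b t`. Otherwise the start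
of `s` lies inside `r`, and deleting the overlap yields a shorter suffix `s₂` with
`w < s < s₂`; induction on the length of the suffix finishes. Conversely, `w = r a u r b t` is
smaller than its suffix `r b t`. Throughout, `LexLt` is definitionally `<` on `List α`.
-/

namespace List

variable {α : Type*} [LinearOrder α]

theorem lt_of_append_lt_append_left {x y : List α} :
    ∀ p : List α, p ++ x < p ++ y → x < y
  | [], h => h
  | c :: p, h => lt_of_append_lt_append_left p (by simpa [cons_lt_cons_iff] using h)

theorem isPrefix_or_exists_mismatch_of_lt :
    ∀ {x y : List α}, x < y →
      x <+: y ∨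
        ∃ (r x' y' : List α) (a b : α), a < b ∧ x = r ++ a :: x' ∧ y = r ++ b :: y'
  | _, _, Lex.nil => .inl nil_prefix
  | _, _, @Lex.rel _ _ a x' b y' hab => .inr ⟨[], x', y', a, b, hab, rfl, rfl⟩
  | _, _, @Lex.cons _ _ c _ _ h => by
    rcases isPrefix_or_exists_mismatch_of_lt h with hp | ⟨r, x', y', a, b, hab, rfl, rfl⟩
    · exact .inl (cons_prefix_cons.mpr ⟨rfl, hp⟩)
    · exact .inr ⟨c :: r, x', y', a, b, hab, rfl, rfl⟩

end List

section

open List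

variable {α : Type*} [LinearOrder α]

theorem exists_eq_append_of_lt_of_isSuffix {s w : List α} (hsw : s <:+ w) (hws : w < s) :
    ∃ (r u t : List α) (a b : α), a < b ∧ w = r ++ [a] ++ u ++ r ++ [b] ++ t := by
  induction hn : s.length using Nat.strong_induction_on generalizing s with
  | _ n ih =>
  obtain ⟨p, hps⟩ := hsw
  have hp : p ≠ [] := by
    rintro rfl
    simp [← hps] at hws
  rcases isPrefix_or_exists_mismatch_of_lt hws with hpre | ⟨r, x, y, a, b, hab, hw, hs⟩
  · have := hpre.length_le
    simp only [← hps, length_append] at this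
    exact absurd (length_eq_zero_iff.mp (by omega)) hp
  have hpw : p <+: w := ⟨s, hps⟩
  by_cases hlen : (r ++ [a]).length ≤ p.length
  · obtain ⟨u, rfl⟩ := prefix_of_prefix_length_le ⟨x, by simp [hw]⟩ hpw hlen
    exact ⟨r, u, y, a, b, hab, by simp [← hps, hs]⟩
  · have hpr : p.length ≤ r.length := by
      simp only [length_append, length_singleton] at hlen
      omega
    obtain ⟨r₂, rfl⟩ := prefix_of_prefix_length_le hpw ⟨a :: x, hw.symm⟩ hpr
    have hs₂ : s = p ++ (r₂ ++ b :: y) := by simp [hs]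
    have hlt : w < r₂ ++ b :: y :=
      hws.trans (lt_of_append_lt_append_left p (by rwa [hps, ← hs₂]))
    refine ih _ ?_ ⟨p ++ p, by simp [← hps, hs]⟩ hlt rfl
    simp [← hn, hs, length_pos_iff.mpr hp]

theorem exists_lt_isSuffix_of_not_isInvLyndonWord {w : List α} (hw : w ≠ [])
    (h : ¬ IsInvLyndonWord w) : ∃ s, s <:+ w ∧ w < s := by
  simp only [IsInvLyndonWord, hw, ne_eq, not_false_eq_true, true_and, not_forall] at h
  obtain ⟨s, hsw, hne, -, hnlt⟩ := h
  exact ⟨s, hsw, lt_of_le_of_ne (not_lt.mp hnlt) (Ne.symm hne)⟩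

theorem not_isInvLyndonWord_append {r u t : List α} {a b : α} (hab : a < b) :
    ¬ IsInvLyndonWord (r ++ [a] ++ u ++ r ++ [b] ++ t) := by
  rintro ⟨-, h⟩
  have hlt : r ++ [a] ++ u ++ r ++ [b] ++ t < r ++ [b] ++ t := by
    simpa using append_left_lt (l₁ := r) (Lex.rel (l₁ := u ++ r ++ b :: t) (l₂ := t) hab)
  refine lt_asymm hlt (h _ ⟨r ++ [a] ++ u, by simp⟩ (fun he => ?_) (by simp))
  have := congrArg length he
  simp only [length_append, length_singleton] at this
  omega

end

theorem stmt5 {α : Type*} [LinearOrder α] (w : List α) (hw : w ≠ []) :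
    ¬ IsInvLyndonWord w ↔
      ∃ (r u t : List α) (a b : α), a < b ∧
        w = r ++ [a] ++ u ++ r ++ [b] ++ t := by
  constructor
  · intro h
    obtain ⟨s, hsw, hws⟩ := exists_lt_isSuffix_of_not_isInvLyndonWord hw h
    exact exists_eq_append_of_lt_of_isSuffix hsw hws
  · rintro ⟨r, u, t, a, b, hab, rfl⟩
    exact not_isInvLyndonWord_append hab
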